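/- Let Δ² be the standard 2-simplex. The dual spine Π² (the union of the three segments joining the barycenter of Δ² to the barycenters of its three edges) separates Δ² into exactly three connected components, each containing exactly one vertex of Δ². -/
import Mathlib


/-- The standard 2-simplex `Δ² = {x ∈ ℝ³ : xᵢ ≥ 0, Σxᵢ = 1}`. -/
def stdTwoSimplex : Set (Fin 3 → ℝ) :=
  {x | (∀ i, 0 ≤ x i) ∧ ∑ i, x i = 1}

/-- The dual spine `Π²` of `Δ²`: the union of the three segments joining the
barycenter `(1/3,1/3,1/3)` to the barycenters of the three edges (the barycenter
of the edge opposite the vertex `eₖ` has `k`-th coordinate `0` and the other two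
coordinates `1/2`). -/
noncomputable def dualSpine : Set (Fin 3 → ℝ) :=
  ⋃ k : Fin 3, segment ℝ (fun _ => 1 / 3) (fun j => if j = k then 0 else 1 / 2)

lemma mem_spine_iff (x : Fin 3 → ℝ) :
    x ∈ dualSpine ↔ ∃ k : Fin 3, ∃ a b : ℝ, 0 ≤ a ∧ 0 ≤ b ∧ a + b = 1 ∧
      (∀ j, x j = if j = k then a/3 else a/3 + b/2) := by
  simp only [dualSpine, Set.mem_iUnion]
  constructor
  · rintro ⟨k, hk⟩
    simp only [segment, Set.mem_setOf_eq] at hk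
    obtain ⟨a, b, ha, hb, hab, hx⟩ := hk
    refine ⟨k, a, b, ha, hb, hab, fun j => ?_⟩
    rw [← hx]
    by_cases h : j = k <;> simp [h, Pi.add_apply, Pi.smul_apply, smul_eq_mul] <;> ring
  · rintro ⟨k, a, b, ha, hb, hab, hx⟩
    refine ⟨k, ?_⟩
    simp only [segment, Set.mem_setOf_eq]
    refine ⟨a, b, ha, hb, hab, funext fun j => ?_⟩
    rw [hx j]
    by_cases h : j = k <;> simp [h, Pi.add_apply, Pi.smul_apply, smul_eq_mul] <;> ring

lemma C_disjoint_spine (i : Fin 3) (x : Fin 3 → ℝ) (hlt : ∀ j, j ≠ i → x j < x i) :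
    x ∉ dualSpine := by
  rw [mem_spine_iff]
  rintro ⟨k, a, b, ha, hb, hab, hx⟩
  have h0 := hx 0; have h1 := hx 1; have h2 := hx 2
  have l0 := hlt 0; have l1 := hlt 1; have l2 := hlt 2
  fin_cases i <;> fin_cases k <;> simp_all <;> linarith

lemma fin3_facts : ∀ k : Fin 3, k+1 ≠ k ∧ k+2 ≠ k ∧ k+1 ≠ k+2 := by decide

lemma fin3_cover : ∀ j k : Fin 3, j = k ∨ j = k+1 ∨ j = k+2 := by decide

lemma cyc_sum (x : Fin 3 → ℝ) (k : Fin 3) :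
    x k + x (k+1) + x (k+2) = x 0 + x 1 + x 2 := by
  fin_cases k
  · show x 0 + x 1 + x 2 = _; ring
  · show x 1 + x 2 + x 0 = _; ring
  · show x 2 + x 0 + x 1 = _; ring

lemma spine_of (k : Fin 3) (x : Fin 3 → ℝ) (hx : x ∈ stdTwoSimplex)
    (he : x (k+1) = x (k+2)) (hl1 : x k ≤ x (k+1)) :
    x ∈ dualSpine := by
  obtain ⟨h1k, h2k, h12⟩ := fin3_facts k
  obtain ⟨hpos, hsum⟩ := hx
  rw [Fin.sum_univ_three] at hsum
  have hs : x k + x (k+1) + x (k+2) = 1 := by rw [cyc_sum]; exact hsum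
  have hl2 : x k ≤ x (k+2) := he ▸ hl1
  have hk0 := hpos k
  rw [mem_spine_iff]
  refine ⟨k, 3 * x k, 1 - 3 * x k, by positivity, by linarith, by ring, fun j => ?_⟩
  rcases fin3_cover j k with h | h | h <;> subst h
  · simp
  · rw [if_neg h1k]
    linarith
  · rw [if_neg h2k]
    linarith

lemma mem_spine_of_no_strict_max (x : Fin 3 → ℝ) (hx : x ∈ stdTwoSimplex)
    (h : ∀ i, ∃ j, j ≠ i ∧ x i ≤ x j) : x ∈ dualSpine := by
  obtain ⟨j0, hj0, e0⟩ := h 0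
  obtain ⟨j1, hj1, e1⟩ := h 1
  obtain ⟨j2, hj2, e2⟩ := h 2
  have d0 : x 0 ≤ x 1 ∨ x 0 ≤ x 2 := by
    rcases fin3_cover j0 0 with hh | hh | hh
    · exact absurd hh hj0
    · subst hh; exact Or.inl e0
    · subst hh; exact Or.inr e0
  have d1 : x 1 ≤ x 2 ∨ x 1 ≤ x 0 := by
    rcases fin3_cover j1 1 with hh | hh | hh
    · exact absurd hh hj1
    · subst hh; exact Or.inl e1
    · subst hh; exact Or.inr e1
  have d2 : x 2 ≤ x 0 ∨ x 2 ≤ x 1 := by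
    rcases fin3_cover j2 2 with hh | hh | hh
    · exact absurd hh hj2
    · subst hh; exact Or.inl e2
    · subst hh; exact Or.inr e2
  rcases d0 with d0 | d0 <;> rcases d1 with d1 | d1 <;> rcases d2 with d2 | d2 <;>
    first
      | exact spine_of 0 x hx (show x 1 = x 2 by linarith) (show x 0 ≤ x 1 by linarith)
      | exact spine_of 1 x hx (show x 2 = x 0 by linarith) (show x 1 ≤ x 2 by linarith)
      | exact spine_of 2 x hx (show x 0 = x 1 by linarith) (show x 2 ≤ x 0 by linarith)

lemma part1 : (stdTwoSimplex \ dualSpine) =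
    ⋃ i : Fin 3, {x ∈ stdTwoSimplex | ∀ j, j ≠ i → x j < x i} := by
  ext x
  simp only [Set.mem_diff, Set.mem_iUnion, Set.mem_setOf_eq]
  constructor
  · rintro ⟨hx, hns⟩
    by_contra hnc
    push_neg at hnc
    exact hns (mem_spine_of_no_strict_max x hx fun i => by
      obtain ⟨j, hj, hle⟩ := hnc i hx
      exact ⟨j, hj, hle⟩)
  · rintro ⟨i, hx, hlt⟩
    exact ⟨hx, C_disjoint_spine i x hlt⟩

lemma part2 : Pairwise fun i j : Fin 3 =>
    Disjoint {x ∈ stdTwoSimplex | ∀ l, l ≠ i → x l < x i}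
      {x ∈ stdTwoSimplex | ∀ l, l ≠ j → x l < x j} := by
  intro i j hij
  rw [Set.disjoint_left]
  rintro x ⟨_, hi⟩ ⟨_, hj⟩
  exact absurd (hi j (Ne.symm hij)) (not_lt.2 (hj i hij).le)

lemma part4 : ∀ i j : Fin 3,
    ((fun l => if l = j then (1 : ℝ) else 0) ∈
      {x ∈ stdTwoSimplex | ∀ l, l ≠ i → x l < x i}) ↔ j = i := by
  intro i j
  constructor
  · rintro ⟨_, hlt⟩
    by_contra hne
    have := hlt j (Ne.symm (Ne.symm hne))
    have h2 : i ≠ j := fun h => hne h.symm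
    simp [hne, h2] at this
    linarith
  · rintro rfl
    refine ⟨⟨fun l => by by_cases h : l = j <;> simp [h], ?_⟩, fun l hl => by simp [hl]⟩
    simp [Finset.sum_ite_eq']

lemma open_O (i : Fin 3) : IsOpen {x : Fin 3 → ℝ | ∀ l, l ≠ i → x l < x i} := by
  have : {x : Fin 3 → ℝ | ∀ l, l ≠ i → x l < x i} =
      ⋂ l, {x : Fin 3 → ℝ | l ≠ i → x l < x i} := by ext x; simp
  rw [this]
  refine isOpen_iInter_of_finite fun l => ?_
  by_cases hl : l = i
  · simp [hl]
  · have : {x : Fin 3 → ℝ | l ≠ i → x l < x i} = {x : Fin 3 → ℝ | x l < x i} := by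
      ext x; simp [hl]
    rw [this]
    exact isOpen_lt (continuous_apply l) (continuous_apply i)

lemma convex_C (i : Fin 3) :
    Convex ℝ {x ∈ stdTwoSimplex | ∀ j, j ≠ i → x j < x i} := by
  rintro x ⟨⟨hxp, hxs⟩, hxl⟩ y ⟨⟨hyp, hys⟩, hyl⟩ a b ha hb hab
  rw [Fin.sum_univ_three] at hxs hys
  refine ⟨⟨fun l => ?_, ?_⟩, fun j hj => ?_⟩
  · simp only [Pi.add_apply, Pi.smul_apply, smul_eq_mul]
    have := hxp l; have := hyp l
    positivity
  · rw [Fin.sum_univ_three]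
    simp only [Pi.add_apply, Pi.smul_apply, smul_eq_mul]
    linear_combination a * hxs + b * hys + hab
  · simp only [Pi.add_apply, Pi.smul_apply, smul_eq_mul]
    rcases ha.lt_or_eq with ha' | ha'
    · have h1 := mul_lt_mul_of_pos_left (hxl j hj) ha'
      have h2 := mul_le_mul_of_nonneg_left (hyl j hj).le hb
      linarith
    · have hb1 : b = 1 := by linarith
      have := hyl j hj
      rw [← ha', hb1]
      simp [this]

lemma part3 (i : Fin 3) :
    connectedComponentIn (stdTwoSimplex \ dualSpine) (fun j => if j = i then 1 else 0) =
      {x ∈ stdTwoSimplex | ∀ j, j ≠ i → x j < x i} := by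
  have hvC : (fun j => if j = i then (1:ℝ) else 0) ∈
      {x ∈ stdTwoSimplex | ∀ j, j ≠ i → x j < x i} := (part4 i i).2 rfl
  have hCF : ∀ l : Fin 3, {x ∈ stdTwoSimplex | ∀ j, j ≠ l → x j < x l} ⊆
      stdTwoSimplex \ dualSpine := fun l x hx => by
    rw [part1]; exact Set.mem_iUnion.2 ⟨l, hx⟩
  apply Set.Subset.antisymm
  · intro x hx
    have hxF : x ∈ stdTwoSimplex \ dualSpine := connectedComponentIn_subset _ _ hx
    rw [part1] at hxF
    obtain ⟨j, hxj⟩ := Set.mem_iUnion.1 hxF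
    rcases eq_or_ne j i with rfl | hne
    · exact hxj
    · exfalso
      have hpre : IsPreconnected
          (connectedComponentIn (stdTwoSimplex \ dualSpine)
            (fun j => if j = i then (1:ℝ) else 0)) :=
        isPreconnected_connectedComponentIn
      obtain ⟨y, hys, hyu, hyw⟩ := hpre
        {x : Fin 3 → ℝ | ∀ l, l ≠ i → x l < x i}
        (⋃ l ∈ {l : Fin 3 | l ≠ i}, {x : Fin 3 → ℝ | ∀ m, m ≠ l → x m < x l})
        (open_O i) (isOpen_biUnion fun l _ => open_O l)
        (by
          intro y hy
          have hyF := connectedComponentIn_subset _ _ hy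
          rw [part1] at hyF
          obtain ⟨l, hyl⟩ := Set.mem_iUnion.1 hyF
          rcases eq_or_ne l i with rfl | hl
          · exact Or.inl hyl.2
          · exact Or.inr (Set.mem_biUnion hl hyl.2))
        ⟨_, mem_connectedComponentIn (hCF i hvC), hvC.2⟩
        ⟨x, hx, Set.mem_biUnion hne hxj.2⟩
      obtain ⟨l, hl, hyl⟩ := Set.mem_iUnion₂.1 hyw
      have h1 := hyu l hl
      have h2 := hyl i (Ne.symm hl)
      exact absurd h1 (not_lt.2 h2.le)
  · exact (convex_C i).isPreconnected.subset_connectedComponentIn hvC (hCF i)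

/-- The dual spine `Π²` separates `Δ²` into exactly three connected components:
the complement `Δ² \ Π²` is the disjoint union over `i` of the sets
`Cᵢ = {x ∈ Δ² : xⱼ < xᵢ for all j ≠ i}`, each `Cᵢ` is exactly the connected
component of the vertex `eᵢ` in `Δ² \ Π²`, and `Cᵢ` contains the vertex `eⱼ`
precisely when `j = i` (so each component contains exactly one vertex). -/
theorem dual_spine_separates_simplex :
    ((stdTwoSimplex \ dualSpine) =
      ⋃ i : Fin 3, {x ∈ stdTwoSimplex | ∀ j, j ≠ i → x j < x i}) ∧
    (Pairwise fun i j : Fin 3 =>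
      Disjoint {x ∈ stdTwoSimplex | ∀ l, l ≠ i → x l < x i}
        {x ∈ stdTwoSimplex | ∀ l, l ≠ j → x l < x j}) ∧
    (∀ i : Fin 3,
      connectedComponentIn (stdTwoSimplex \ dualSpine) (fun j => if j = i then 1 else 0) =
        {x ∈ stdTwoSimplex | ∀ j, j ≠ i → x j < x i}) ∧
    (∀ i j : Fin 3,
      ((fun l => if l = j then (1 : ℝ) else 0) ∈
        {x ∈ stdTwoSimplex | ∀ l, l ≠ i → x l < x i}) ↔ j = i) := by
  exact ⟨part1, part2, part3, part4⟩
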